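/- arXiv:1910.07479 — 3 statements merged into one kernel-verified Lean document; each statement's English description precedes it below -/
import Mathlib

section
/- Let Ω be a finite set, μ a strictly positive pmf on Ω, ρ : Ω → ℝ, Φ : Ω → S, and Ψ : Ω → ℝ a function factoring through Φ (Ψ = h ∘ Φ). Define the weighted objective L(g) = ∑_ω μ(ω)·((g(Φ(ω)) − ρ(ω))·Ψ(ω))². Then the conditional expectation g*(s) = E_μ[ρ·1{Φ=s}]/P_μ(Φ=s) (on s with positive probability, arbitrary elsewhere) is a global minimizer of L. -/
/-! The minimiser is the conditional expectation `m` of `ρ` given `Φ`, whose residual `ρ - m ∘ Φ`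
is `μ`-orthogonal to every function of `Φ`. Since the weight `Ψ = h ∘ Φ` is itself a function of
`Φ`, the objective splits as `L(g) = L(m) + ∑ μ ((g - m) ∘ Φ · Ψ)²` (Pythagoras), so `L(m) ≤ L(g)`. -/

open Finset

section FiberMean

variable {Ω S : Type*} [Fintype Ω] [DecidableEq S]

def fiberSum (f : Ω → ℝ) (Φ : Ω → S) (s : S) : ℝ :=
  ∑ ω, if Φ ω = s then f ω else 0

/-- The `μ`-average of `ρ` over the fiber `Φ⁻¹' {s}`; it is `0` on empty fibers. -/
noncomputable def fiberMean (μ ρ : Ω → ℝ) (Φ : Ω → S) (s : S) : ℝ :=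
  fiberSum (fun ω => μ ω * ρ ω) Φ s / fiberSum μ Φ s

theorem sum_eq_sum_image_fiberSum (f : Ω → ℝ) (Φ : Ω → S) :
    ∑ ω, f ω = ∑ s ∈ univ.image Φ, fiberSum f Φ s := by
  rw [← sum_fiberwise_of_maps_to fun ω _ => mem_image_of_mem Φ (mem_univ ω)]
  simp only [fiberSum, sum_filter]

theorem fiberSum_mul_fiberMean {μ : Ω → ℝ} (hμ : ∀ ω, 0 ≤ μ ω) (ρ : Ω → ℝ) (Φ : Ω → S)
    (s : S) : fiberSum μ Φ s * fiberMean μ ρ Φ s = fiberSum (fun ω => μ ω * ρ ω) Φ s := by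
  by_cases hmass : fiberSum μ Φ s = 0
  · have hfiber : ∀ ω, Φ ω = s → μ ω = 0 := fun ω hω => by
      have := (sum_eq_zero_iff_of_nonneg fun ω _ => by split_ifs <;> simp [hμ ω]).mp hmass ω
        (mem_univ ω)
      rwa [if_pos hω] at this
    have hweighted : fiberSum (fun ω => μ ω * ρ ω) Φ s = 0 :=
      sum_eq_zero fun ω _ => by split_ifs with hω <;> simp [hfiber ω, hω]
    rw [hmass, hweighted, zero_mul]
  · exact mul_div_cancel₀ _ hmass

theorem sum_mul_comp_mul_sub_fiberMean_eq_zero {μ : Ω → ℝ} (hμ : ∀ ω, 0 ≤ μ ω) (ρ : Ω → ℝ)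
    (Φ : Ω → S) (c : S → ℝ) :
    ∑ ω, μ ω * c (Φ ω) * (ρ ω - fiberMean μ ρ Φ (Φ ω)) = 0 := by
  rw [sum_eq_sum_image_fiberSum _ Φ]
  refine sum_eq_zero fun s _ => ?_
  have hfiber : fiberSum (fun ω => μ ω * c (Φ ω) * (ρ ω - fiberMean μ ρ Φ (Φ ω))) Φ s
      = c s * (fiberSum (fun ω => μ ω * ρ ω) Φ s - fiberSum μ Φ s * fiberMean μ ρ Φ s) := by
    simp only [fiberSum, mul_sum, sum_mul, ← sum_sub_distrib]
    refine sum_congr rfl fun ω _ => ?_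
    split_ifs with hω
    · rw [hω]; ring
    · ring
  rw [hfiber, fiberSum_mul_fiberMean hμ, sub_self, mul_zero]

theorem sum_sq_sub_mul_eq_fiberMean_add {μ : Ω → ℝ} (hμ : ∀ ω, 0 ≤ μ ω) (ρ : Ω → ℝ)
    (Φ : Ω → S) (h g : S → ℝ) :
    ∑ ω, μ ω * ((g (Φ ω) - ρ ω) * h (Φ ω)) ^ 2
      = ∑ ω, μ ω * ((fiberMean μ ρ Φ (Φ ω) - ρ ω) * h (Φ ω)) ^ 2
        + ∑ ω, μ ω * ((g (Φ ω) - fiberMean μ ρ Φ (Φ ω)) * h (Φ ω)) ^ 2 := by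
  have hcross := sum_mul_comp_mul_sub_fiberMean_eq_zero hμ ρ Φ
    fun s => 2 * (fiberMean μ ρ Φ s - g s) * h s ^ 2
  rw [← sub_eq_zero, ← hcross, ← sum_add_distrib, ← sum_sub_distrib]
  exact sum_congr rfl fun ω _ => by ring

end FiberMean

theorem weighted_regression_condexp_optimal_general
    {Ω S : Type*} [Fintype Ω] [DecidableEq S]
    (μ : Ω → ℝ) (hμ0 : ∀ ω, 0 < μ ω)
    (ρ : Ω → ℝ) (Φ : Ω → S)
    (Ψ : Ω → ℝ) (h : S → ℝ) (hΨ : ∀ ω, Ψ ω = h (Φ ω))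
    (gstar : S → ℝ)
    (hgstar : ∀ s, gstar s = (∑ ω, if Φ ω = s then μ ω * ρ ω else 0)
                              / (∑ ω, if Φ ω = s then μ ω else 0)) :
    ∀ g : S → ℝ,
      ∑ ω, μ ω * ((gstar (Φ ω) - ρ ω) * Ψ ω) ^ 2
        ≤ ∑ ω, μ ω * ((g (Φ ω) - ρ ω) * Ψ ω) ^ 2 := by
  intro g
  have hμ : ∀ ω, 0 ≤ μ ω := fun ω => (hμ0 ω).le
  obtain rfl : gstar = fiberMean μ ρ Φ := funext hgstar
  simp only [hΨ]
  rw [sum_sq_sub_mul_eq_fiberMean_add hμ ρ Φ h g]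
  exact le_add_of_nonneg_right (sum_nonneg fun ω _ => mul_nonneg (hμ ω) (sq_nonneg _))

theorem weighted_regression_condexp_optimal
    {Ω S : Type*} [Fintype Ω] [Fintype S] [DecidableEq S]
    (μ : Ω → ℝ) (hμ0 : ∀ ω, 0 < μ ω) (hμ1 : ∑ ω, μ ω = 1)
    (ρ : Ω → ℝ) (Φ : Ω → S)
    (Ψ : Ω → ℝ) (h : S → ℝ) (hΨ : ∀ ω, Ψ ω = h (Φ ω))
    (gstar : S → ℝ)
    (hgstar : ∀ s, gstar s = (∑ ω, if Φ ω = s then μ ω * ρ ω else 0)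
                              / (∑ ω, if Φ ω = s then μ ω else 0)) :
    ∀ g : S → ℝ,
      ∑ ω, μ ω * ((gstar (Φ ω) - ρ ω) * Ψ ω) ^ 2
        ≤ ∑ ω, μ ω * ((g (Φ ω) - ρ ω) * Ψ ω) ^ 2 :=
  weighted_regression_condexp_optimal_general μ hμ0 ρ Φ Ψ h hΨ gstar hgstar
end

section
/- Let Ω₁, Ω₂ be finite sets, μ₁, ν₁ pmfs on Ω₁ with supp(ν₁) ⊆ supp(μ₁), μ₂, ν₂ pmfs on Ω₂ with supp(ν₂) ⊆ supp(μ₂), and f : Ω₁ → ℝ. Let ρ₁(ω₁) = ν₁(ω₁)/μ₁(ω₁) and ρ(ω₁,ω₂) = ρ₁(ω₁)·ν₂(ω₂)/μ₂(ω₂). Then under the product measure μ₁ ⊗ μ₂: Var(ρ₁(ω₁)·f(ω₁)) ≤ Var(ρ(ω₁,ω₂)·f(ω₁)). -/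
/-!
Write `r = ν₂ / μ₂`, so that `ρ = ρ₁ · r` with the two factors depending on independent
coordinates. The support condition gives `𝔼[r] = 1`, hence `𝔼[ρ f] = 𝔼[ρ₁ f]`, while
`𝔼[r²] ≥ 𝔼[r]² = 1` gives `𝔼[(ρ f)²] = 𝔼[(ρ₁ f)²] 𝔼[r²] ≥ 𝔼[(ρ₁ f)²]`.
-/

open Finset

section Weights

variable {α β : Type*} [Fintype α] [Fintype β]

theorem sum_mul_div_eq_one_of_support {μ ν : α → ℝ} (hν0 : ∀ a, 0 ≤ ν a) (hν1 : ∑ a, ν a = 1)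
    (hsupp : ∀ a, 0 < ν a → 0 < μ a) : ∑ a, μ a * (ν a / μ a) = 1 := by
  refine (sum_congr rfl fun a _ => mul_div_cancel_of_imp' fun hμ => ?_).trans hν1
  by_contra hν
  exact (hsupp a ((hν0 a).lt_of_ne' hν)).ne' hμ

theorem one_le_sum_mul_sq_of_sum_mul_eq_one {ν R : α → ℝ} (hν0 : ∀ a, 0 ≤ ν a)
    (hν1 : ∑ a, ν a = 1) (hR : ∑ a, ν a * R a = 1) : 1 ≤ ∑ a, ν a * R a ^ 2 := by
  have hdev : 0 ≤ ∑ a, ν a * (R a - 1) ^ 2 :=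
    sum_nonneg fun a _ => mul_nonneg (hν0 a) (sq_nonneg _)
  have hexpand : ∑ a, ν a * (R a - 1) ^ 2 = ∑ a, ν a * R a ^ 2 - 2 * ∑ a, ν a * R a + ∑ a, ν a := by
    simp only [mul_sum, ← sum_sub_distrib, ← sum_add_distrib]
    exact sum_congr rfl fun a _ => by ring
  linarith

theorem sum_prod_mul_mul (μ g : α → ℝ) (ν h : β → ℝ) :
    ∑ p : α × β, μ p.1 * ν p.2 * (g p.1 * h p.2) = (∑ a, μ a * g a) * ∑ b, ν b * h b := by
  rw [Fintype.sum_prod_type, Fintype.sum_mul_sum]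
  exact sum_congr rfl fun a _ => sum_congr rfl fun b _ => by ring

theorem sum_prod_mul_fst {μ : α → ℝ} {ν : β → ℝ} (hν1 : ∑ b, ν b = 1) (g : α → ℝ) :
    ∑ p : α × β, μ p.1 * ν p.2 * g p.1 = ∑ a, μ a * g a := by
  simpa [hν1] using sum_prod_mul_mul μ g ν 1

theorem variance_le_variance_mul_of_sum_mul_eq_one {μ X : α → ℝ} {ν R : β → ℝ}
    (hμ0 : ∀ a, 0 ≤ μ a) (hν0 : ∀ b, 0 ≤ ν b) (hν1 : ∑ b, ν b = 1)
    (hR : ∑ b, ν b * R b = 1) :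
    (∑ p : α × β, μ p.1 * ν p.2 * X p.1 ^ 2) - (∑ p : α × β, μ p.1 * ν p.2 * X p.1) ^ 2
      ≤ (∑ p : α × β, μ p.1 * ν p.2 * (X p.1 * R p.2) ^ 2)
        - (∑ p : α × β, μ p.1 * ν p.2 * (X p.1 * R p.2)) ^ 2 := by
  simp only [mul_pow]
  rw [sum_prod_mul_mul μ (X · ^ 2) ν (R · ^ 2), sum_prod_mul_mul μ X ν R, hR, mul_one,
    sum_prod_mul_fst hν1 (X · ^ 2), sum_prod_mul_fst hν1 X]
  have hX : 0 ≤ ∑ a, μ a * X a ^ 2 := sum_nonneg fun a _ => mul_nonneg (hμ0 a) (sq_nonneg _)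
  nlinarith [one_le_sum_mul_sq_of_sum_mul_eq_one hν0 hν1 hR]

end Weights

theorem pdis_term_variance_le_general
    {Ω₁ Ω₂ : Type*} [Fintype Ω₁] [Fintype Ω₂]
    (μ₁ : Ω₁ → ℝ) (μ₂ ν₂ : Ω₂ → ℝ) (f : Ω₁ → ℝ)
    (hμ₁0 : ∀ ω, 0 ≤ μ₁ ω)
    (hμ₂0 : ∀ ω, 0 ≤ μ₂ ω) (hμ₂1 : ∑ ω, μ₂ ω = 1)
    (hν₂0 : ∀ ω, 0 ≤ ν₂ ω) (hν₂1 : ∑ ω, ν₂ ω = 1)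
    (hsupp₂ : ∀ ω, 0 < ν₂ ω → 0 < μ₂ ω)
    (ρ₁ : Ω₁ → ℝ)
    (ρ : Ω₁ × Ω₂ → ℝ) (hρ : ∀ p : Ω₁ × Ω₂, ρ p = ρ₁ p.1 * (ν₂ p.2 / μ₂ p.2)) :
    (∑ p : Ω₁ × Ω₂, (μ₁ p.1 * μ₂ p.2) * (ρ₁ p.1 * f p.1) ^ 2)
      - (∑ p : Ω₁ × Ω₂, (μ₁ p.1 * μ₂ p.2) * (ρ₁ p.1 * f p.1)) ^ 2
    ≤ (∑ p : Ω₁ × Ω₂, (μ₁ p.1 * μ₂ p.2) * (ρ p * f p.1) ^ 2)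
      - (∑ p : Ω₁ × Ω₂, (μ₁ p.1 * μ₂ p.2) * (ρ p * f p.1)) ^ 2 := by
  have hfactor : ∀ p : Ω₁ × Ω₂, ρ p * f p.1 = ρ₁ p.1 * f p.1 * (ν₂ p.2 / μ₂ p.2) := fun p => by
    rw [hρ]; ring
  simp only [hfactor]
  exact variance_le_variance_mul_of_sum_mul_eq_one (X := fun ω => ρ₁ ω * f ω)
    (R := fun ω => ν₂ ω / μ₂ ω) hμ₁0 hμ₂0 hμ₂1 (sum_mul_div_eq_one_of_support hν₂0 hν₂1 hsupp₂)

theorem pdis_term_variance_le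
    {Ω₁ Ω₂ : Type*} [Fintype Ω₁] [Fintype Ω₂]
    (μ₁ ν₁ : Ω₁ → ℝ) (μ₂ ν₂ : Ω₂ → ℝ) (f : Ω₁ → ℝ)
    (hμ₁0 : ∀ ω, 0 ≤ μ₁ ω) (hμ₁1 : ∑ ω, μ₁ ω = 1)
    (hν₁0 : ∀ ω, 0 ≤ ν₁ ω) (hν₁1 : ∑ ω, ν₁ ω = 1)
    (hμ₂0 : ∀ ω, 0 ≤ μ₂ ω) (hμ₂1 : ∑ ω, μ₂ ω = 1)
    (hν₂0 : ∀ ω, 0 ≤ ν₂ ω) (hν₂1 : ∑ ω, ν₂ ω = 1)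
    (hsupp₁ : ∀ ω, 0 < ν₁ ω → 0 < μ₁ ω)
    (hsupp₂ : ∀ ω, 0 < ν₂ ω → 0 < μ₂ ω)
    (ρ₁ : Ω₁ → ℝ) (hρ₁ : ∀ ω, ρ₁ ω = ν₁ ω / μ₁ ω)
    (ρ : Ω₁ × Ω₂ → ℝ) (hρ : ∀ p : Ω₁ × Ω₂, ρ p = ρ₁ p.1 * (ν₂ p.2 / μ₂ p.2)) :
    (∑ p : Ω₁ × Ω₂, (μ₁ p.1 * μ₂ p.2) * (ρ₁ p.1 * f p.1) ^ 2)
      - (∑ p : Ω₁ × Ω₂, (μ₁ p.1 * μ₂ p.2) * (ρ₁ p.1 * f p.1)) ^ 2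
    ≤ (∑ p : Ω₁ × Ω₂, (μ₁ p.1 * μ₂ p.2) * (ρ p * f p.1) ^ 2)
      - (∑ p : Ω₁ × Ω₂, (μ₁ p.1 * μ₂ p.2) * (ρ p * f p.1)) ^ 2 :=
  pdis_term_variance_le_general μ₁ μ₂ ν₂ f hμ₁0 hμ₂0 hμ₂1 hν₂0 hν₂1 hsupp₂ ρ₁ ρ hρ
end

section
/- Let Ω be a finite set, μ a pmf on Ω, ν a pmf with supp(ν) ⊆ supp(μ), ρ = ν/μ (with 0/0 := 0), Φ : Ω → S a function, and Ψ : Ω → ℝ. Suppose Ψ does NOT factor through Φ in general; define the CIS estimator value E_μ[w(Φ)·Ψ] with w(s) = E_μ[ρ·1{Φ=s}]/P_μ(Φ=s). Then the bias of the estimator satisfies E_μ[w(Φ)·Ψ] − E_ν[Ψ] = E_μ[ (w(Φ(ω)) − ρ(ω))·Ψ(ω) ], and this quantity is zero whenever Ψ is constant on the level sets of Φ. -/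
theorem cis_bias_characterization
    {Ω S : Type*} [Fintype Ω] [Fintype S] [DecidableEq S]
    (μ ν : Ω → ℝ)
    (hμ0 : ∀ ω, 0 ≤ μ ω) (hμ1 : ∑ ω, μ ω = 1)
    (hν0 : ∀ ω, 0 ≤ ν ω) (hν1 : ∑ ω, ν ω = 1)
    (hsupp : ∀ ω, 0 < ν ω → 0 < μ ω)
    (ρ : Ω → ℝ) (hρ : ∀ ω, ρ ω = ν ω / μ ω)
    (Φ : Ω → S) (Ψ : Ω → ℝ)
    (w : S → ℝ)
    (hw : ∀ s, w s = (∑ ω, if Φ ω = s then μ ω * ρ ω else 0)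
                      / (∑ ω, if Φ ω = s then μ ω else 0)) :
    ((∑ ω, μ ω * (w (Φ ω) * Ψ ω)) - ∑ ω, ν ω * Ψ ω
        = ∑ ω, μ ω * ((w (Φ ω) - ρ ω) * Ψ ω))
    ∧ ((∀ ω ω', Φ ω = Φ ω' → Ψ ω = Ψ ω') →
        ∑ ω, μ ω * (w (Φ ω) * Ψ ω) = ∑ ω, ν ω * Ψ ω) := by
  have hmrn : ∀ ω, μ ω * ρ ω = ν ω := by
    intro ω
    rcases (hμ0 ω).eq_or_lt with h | h
    · have hν : ν ω = 0 := by
        by_contra hne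
        have := hsupp ω (lt_of_le_of_ne (hν0 ω) (Ne.symm hne))
        linarith
      simp [← h, hν]
    · rw [hρ ω]
      field_simp
  have h1 : (∑ ω, μ ω * (w (Φ ω) * Ψ ω)) - ∑ ω, ν ω * Ψ ω
      = ∑ ω, μ ω * ((w (Φ ω) - ρ ω) * Ψ ω) := by
    rw [← Finset.sum_sub_distrib]
    apply Finset.sum_congr rfl
    intro ω _
    rw [← hmrn ω]; ring
  refine ⟨h1, fun hΨ => ?_⟩
  have key : ∑ ω, μ ω * ((w (Φ ω) - ρ ω) * Ψ ω) = 0 := by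
    rw [← Finset.sum_fiberwise Finset.univ Φ (fun ω => μ ω * ((w (Φ ω) - ρ ω) * Ψ ω))]
    apply Finset.sum_eq_zero
    intro s _
    set F := Finset.univ.filter (fun ω => Φ ω = s) with hF
    have hD : (∑ ω, if Φ ω = s then μ ω else 0) = ∑ ω ∈ F, μ ω := by
      rw [hF, Finset.sum_filter]
    have hN : (∑ ω, if Φ ω = s then μ ω * ρ ω else 0) = ∑ ω ∈ F, ν ω := by
      rw [hF, Finset.sum_filter]
      exact Finset.sum_congr rfl fun ω _ => by rw [hmrn ω]
    by_cases hD0 : (∑ ω ∈ F, μ ω) = 0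
    · apply Finset.sum_eq_zero
      intro ω hω
      have : μ ω = 0 :=
        (Finset.sum_eq_zero_iff_of_nonneg (fun x _ => hμ0 x)).mp hD0 ω hω
      simp [this]
    · have hFne : F.Nonempty := by
        by_contra hne
        rw [Finset.not_nonempty_iff_eq_empty] at hne
        simp [hne] at hD0
      obtain ⟨ω₀, hω₀⟩ := hFne
      have hΦ0 : Φ ω₀ = s := (Finset.mem_filter.mp hω₀).2
      have hws : w s = (∑ ω ∈ F, ν ω) / (∑ ω ∈ F, μ ω) := by
        rw [hw s, hN, hD]
      have hrw : ∀ ω ∈ F, μ ω * ((w (Φ ω) - ρ ω) * Ψ ω)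
          = Ψ ω₀ * (w s * μ ω - ν ω) := by
        intro ω hω
        have hΦ : Φ ω = s := (Finset.mem_filter.mp hω).2
        have hΨω : Ψ ω = Ψ ω₀ := hΨ ω ω₀ (by rw [hΦ, hΦ0])
        rw [hΦ, hΨω, ← hmrn ω]; ring
      rw [Finset.sum_congr rfl hrw, ← Finset.mul_sum, Finset.sum_sub_distrib,
        ← Finset.mul_sum, hws, div_mul_cancel₀ _ hD0, sub_self, mul_zero]
  linarith [h1, key]
end
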